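/- arXiv:2512.16654 — 5 statements merged into one kernel-verified Lean document; each statement's English description precedes it below -/
import Mathlib

section
/- The minimum Hamming distance of the binary Reed–Muller code RM(s,r) with 0 ≤ s ≤ r equals 2^{r−s}. -/
open MvPolynomial Finset

-- splitting the Hamming norm along the first coordinate
lemma hnorm_split (r : ℕ) (f : (Fin (r + 1) → ZMod 2) → ZMod 2) :
    hammingNorm f = hammingNorm (fun x : Fin r → ZMod 2 => f (Fin.cons 0 x))
      + hammingNorm (fun x : Fin r → ZMod 2 => f (Fin.cons 1 x)) := by
  classical
  have h2 : ∀ a : ZMod 2, a = 0 ∨ a = 1 := by decide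
  unfold hammingNorm
  rw [← Finset.card_filter_add_card_filter_not (s := Finset.univ.filter fun x : Fin (r+1) → ZMod 2 => f x ≠ 0) (p := fun x => x 0 = 0)]
  congr 1
  · refine Finset.card_bij' (fun x _ => Fin.tail x) (fun y _ => Fin.cons 0 y) ?_ ?_ ?_ ?_
    · intro x hx
      simp only [Finset.mem_filter, Finset.mem_univ, true_and] at hx ⊢
      have h := Fin.cons_self_tail x
      rw [hx.2] at h
      rw [h]; exact hx.1
    · intro y hy
      simp only [Finset.mem_filter, Finset.mem_univ, true_and] at hy ⊢
      exact ⟨hy, Fin.cons_zero _ _⟩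
    · intro x hx
      simp only [Finset.mem_filter, Finset.mem_univ, true_and] at hx
      have h := Fin.cons_self_tail x
      rw [hx.2] at h; exact h
    · intro y _; exact Fin.tail_cons _ _
  · refine Finset.card_bij' (fun x _ => Fin.tail x) (fun y _ => Fin.cons 1 y) ?_ ?_ ?_ ?_
    · intro x hx
      simp only [Finset.mem_filter, Finset.mem_univ, true_and] at hx ⊢
      have hx0 : x 0 = 1 := (h2 (x 0)).resolve_left hx.2
      have h := Fin.cons_self_tail x
      rw [hx0] at h
      rw [h]; exact hx.1
    · intro y hy
      simp only [Finset.mem_filter, Finset.mem_univ, true_and] at hy ⊢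
      exact ⟨hy, by simp⟩
    · intro x hx
      simp only [Finset.mem_filter, Finset.mem_univ, true_and] at hx
      have hx0 : x 0 = 1 := (h2 (x 0)).resolve_left hx.2
      have h := Fin.cons_self_tail x
      rw [hx0] at h; exact h
    · intro y _; exact Fin.tail_cons _ _

lemma rm_lower : ∀ r s : ℕ, s ≤ r → ∀ p : MvPolynomial (Fin r) (ZMod 2),
    p.totalDegree ≤ s →
    (fun x : Fin r → ZMod 2 => eval x p) ≠ (fun _ => 0) →
    2 ^ (r - s) ≤ hammingNorm (fun x : Fin r → ZMod 2 => eval x p) := by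
  intro r
  induction r with
  | zero =>
    intro s hs p hd hne
    have hpos : 0 < hammingNorm (fun x : Fin 0 → ZMod 2 => eval x p) :=
      hammingNorm_pos_iff.mpr hne
    interval_cases s
    exact hpos
  | succ r ih =>
    intro s hs p hd hne
    have hpos : 0 < hammingNorm (fun x : Fin (r+1) → ZMod 2 => eval x p) :=
      hammingNorm_pos_iff.mpr hne
    rcases Nat.lt_or_ge s (r + 1) with hsr | hsr
    swap
    · have : r + 1 - s = 0 := by omega
      rw [this]; exact hpos
    have hsr' : s ≤ r := by omega
    set P := MvPolynomial.finSuccEquiv (ZMod 2) r p with hP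
    set q0 := P.coeff 0 with hq0
    set q1 := Polynomial.eval (1 : MvPolynomial (Fin r) (ZMod 2)) P with hq1
    have hA : ∀ x : Fin r → ZMod 2, eval (Fin.cons (0 : ZMod 2) x) p = eval x q0 := by
      intro x
      rw [eval_eq_eval_mv_eval', Polynomial.eval_zero_map, ← Polynomial.coeff_zero_eq_eval_zero]
    have hB : ∀ x : Fin r → ZMod 2, eval (Fin.cons (1 : ZMod 2) x) p = eval x q1 := by
      intro x
      rw [eval_eq_eval_mv_eval', Polynomial.eval_one_map]
    have hcoeff : ∀ i, P.coeff i ≠ 0 → (P.coeff i).totalDegree + i ≤ s := fun i hi =>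
      le_trans (totalDegree_coeff_finSuccEquiv_add_le p i hi) hd
    have hdq0 : q0.totalDegree ≤ s := by
      by_cases h : q0 = 0
      · simp [h]
      · have h2 := hcoeff 0 h
        rw [← hq0] at h2
        omega
    have hsum : q1 = ∑ i ∈ Finset.range (P.natDegree + 1), P.coeff i := by
      rw [hq1, Polynomial.eval_eq_sum_range]; simp
    have hdq1 : q1.totalDegree ≤ s := by
      rw [hsum]
      refine le_trans (totalDegree_finset_sum _ _) (Finset.sup_le fun i _ => ?_)
      by_cases h : P.coeff i = 0
      · simp [h]
      · have := hcoeff i h; omega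
    set g := q1 - q0 with hg
    have hgsum : g = ∑ i ∈ Finset.Ico 1 (P.natDegree + 1), P.coeff i := by
      rw [hg, hsum, Finset.range_eq_Ico,
        Finset.sum_eq_sum_Ico_succ_bot (by omega : 0 < P.natDegree + 1)]
      rw [hq0, add_sub_cancel_left]
    have hgdeg : g ≠ 0 → 1 ≤ s ∧ g.totalDegree ≤ s - 1 := by
      intro hgne
      have h1s : 1 ≤ s := by
        by_contra h
        apply hgne
        rw [hgsum]
        refine Finset.sum_eq_zero fun i hi => ?_
        by_contra hci
        have h1 := hcoeff i hci
        have h2 : 1 ≤ i := (Finset.mem_Ico.mp hi).1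
        omega
      refine ⟨h1s, ?_⟩
      rw [hgsum]
      refine le_trans (totalDegree_finset_sum _ _) (Finset.sup_le fun i hi => ?_)
      by_cases h : P.coeff i = 0
      · simp [h]
      · have h1 := hcoeff i h
        have h2 : 1 ≤ i := (Finset.mem_Ico.mp hi).1
        omega
    set f0 : (Fin r → ZMod 2) → ZMod 2 := fun x => eval x q0 with hf0
    set f1 : (Fin r → ZMod 2) → ZMod 2 := fun x => eval x q1 with hf1
    have hsplit : hammingNorm (fun x : Fin (r+1) → ZMod 2 => eval x p)
        = hammingNorm f0 + hammingNorm f1 := by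
      rw [hnorm_split r (fun x => eval x p)]
      simp only [hA, hB]; rfl
    have hne' : ∃ x : Fin (r+1) → ZMod 2, eval x p ≠ 0 := by
      by_contra h
      push_neg at h
      exact hne (funext h)
    obtain ⟨x, hx⟩ := hne'
    have hx' : f0 (Fin.tail x) ≠ 0 ∨ f1 (Fin.tail x) ≠ 0 := by
      rcases (by decide : ∀ a : ZMod 2, a = 0 ∨ a = 1) (x 0) with h | h
      · left
        rw [hf0]
        simp only
        rw [← hA]
        have hc := Fin.cons_self_tail x
        rw [h] at hc
        rw [hc]; exact hx
      · right
        rw [hf1]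
        simp only
        rw [← hB]
        have hc := Fin.cons_self_tail x
        rw [h] at hc
        rw [hc]; exact hx
    by_cases hgz : ∀ y : Fin r → ZMod 2, eval y g = 0
    · have heq : ∀ y, f1 y = f0 y := by
        intro y
        have h := hgz y
        rw [hg, map_sub, sub_eq_zero] at h
        exact h
      have hf0ne : (fun y : Fin r → ZMod 2 => eval y q0) ≠ (fun _ => 0) := by
        intro hcontra
        have h0 : f0 (Fin.tail x) = 0 := congrFun hcontra _
        rcases hx' with h | h
        · exact h h0
        · exact h (by rw [heq]; exact h0)
      have hf1ne : (fun y : Fin r → ZMod 2 => eval y q1) ≠ (fun _ => 0) := by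
        intro hcontra
        apply hf0ne
        funext y
        show f0 y = 0
        rw [← heq y]
        exact congrFun hcontra y
      have l0 : 2 ^ (r - s) ≤ hammingNorm f0 := ih s hsr' q0 hdq0 hf0ne
      have l1 : 2 ^ (r - s) ≤ hammingNorm f1 := ih s hsr' q1 hdq1 hf1ne
      rw [hsplit]
      have he : r + 1 - s = (r - s) + 1 := by omega
      rw [he, pow_succ]
      omega
    · push_neg at hgz
      obtain ⟨y, hy⟩ := hgz
      have hgne : g ≠ 0 := by
        intro h
        rw [h] at hy
        simp at hy
      obtain ⟨h1s, hdg⟩ := hgdeg hgne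
      have hgfun : (fun z : Fin r → ZMod 2 => eval z g) ≠ (fun _ => 0) := by
        intro h
        exact hy (congrFun h y)
      have lg : 2 ^ (r - (s - 1)) ≤ hammingNorm (fun z : Fin r → ZMod 2 => eval z g) :=
        ih (s - 1) (by omega) g hdg hgfun
      have hsub : (fun z : Fin r → ZMod 2 => eval z g) = f1 - f0 := by
        funext z
        simp [hg, map_sub, hf1, hf0]
      have htri : hammingNorm (f1 - f0) ≤ hammingNorm f1 + hammingNorm f0 :=
        calc hammingNorm (f1 - f0) = hammingDist f1 f0 := by unfold hammingDist hammingNorm; simp [sub_eq_zero]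
          _ ≤ hammingDist f1 0 + hammingDist 0 f0 := hammingDist_triangle _ _ _
          _ = hammingNorm f1 + hammingNorm f0 := by
              rw [hammingDist_zero_right, hammingDist_zero_left]
      rw [hsplit]
      have he : r + 1 - s = r - (s - 1) := by omega
      rw [he]
      rw [hsub] at lg
      omega

lemma count_aux (r s : ℕ) (hs : s ≤ r) :
    (Finset.univ.filter fun x : Fin r → ZMod 2 =>
      ∀ i : Fin s, x (Fin.castLE hs i) = 1).card = 2 ^ (r - s) := by
  have : (Finset.univ.filter fun x : Fin r → ZMod 2 =>
      ∀ i : Fin s, x (Fin.castLE hs i) = 1).card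
      = (Finset.univ : Finset (Fin (r - s) → ZMod 2)).card := by
    refine Finset.card_bij'
      (fun x _ => fun j : Fin (r - s) => x ⟨s + j.1, by omega⟩)
      (fun z _ => fun i : Fin r => if h : i.1 < s then 1 else z ⟨i.1 - s, by omega⟩)
      (fun _ _ => Finset.mem_univ _) ?_ ?_ ?_
    · intro z _
      simp only [Finset.mem_filter, Finset.mem_univ, true_and]
      intro i
      simp only [Fin.coe_castLE]
      rw [dif_pos i.isLt]
    · intro x hx
      simp only [Finset.mem_filter, Finset.mem_univ, true_and] at hx
      funext i
      beta_reduce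
      by_cases h : i.1 < s
      · rw [dif_pos h]
        have := hx ⟨i.1, h⟩
        have he : Fin.castLE hs ⟨i.1, h⟩ = i := by ext; rfl
        rw [he] at this
        exact this.symm
      · rw [dif_neg h]
        apply congrArg
        ext
        simp
        omega
    · intro z _
      funext j
      beta_reduce
      rw [dif_neg (by omega : ¬ s + j.1 < s)]
      apply congrArg
      ext
      simp
  rw [this]
  simp [ZMod.card]

lemma rm_weight (r s : ℕ) (hs : s ≤ r) :
    hammingNorm (fun x : Fin r → ZMod 2 =>
      eval x (∏ i : Fin s, (X (Fin.castLE hs i) : MvPolynomial (Fin r) (ZMod 2))))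
      = 2 ^ (r - s) := by
  have h1 : ∀ a : ZMod 2, a ≠ 0 ↔ a = 1 := by decide
  rw [← count_aux r s hs]
  unfold hammingNorm
  apply Finset.card_bij (fun x _ => x) <;> intro x hx
  · simp only [Finset.mem_filter, Finset.mem_univ, true_and] at hx ⊢
    intro i
    rw [map_prod] at hx
    simp only [eval_X] at hx
    rw [Finset.prod_ne_zero_iff] at hx
    exact (h1 _).mp (hx i (Finset.mem_univ i))
  · exact fun y _ h => h
  · refine ⟨x, ?_, rfl⟩
    simp only [Finset.mem_filter, Finset.mem_univ, true_and] at hx ⊢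
    rw [map_prod]
    simp only [eval_X]
    rw [Finset.prod_ne_zero_iff]
    intro i _
    rw [h1]
    exact hx i

/-- The minimum Hamming distance of the Reed–Muller code `RM(s,r)` (`0 ≤ s ≤ r`),
i.e. the minimum Hamming weight of a nonzero evaluation vector of a Boolean
polynomial in `r` variables of degree at most `s`, equals `2^{r−s}`. -/
theorem stmt4 (r s : ℕ) (hs : s ≤ r) :
    sInf {k | ∃ p : MvPolynomial (Fin r) (ZMod 2), p.totalDegree ≤ s ∧
      (fun x : Fin r → ZMod 2 => MvPolynomial.eval x p) ≠ (fun _ => (0 : ZMod 2)) ∧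
      k = hammingNorm (fun x : Fin r → ZMod 2 => MvPolynomial.eval x p)}
    = 2 ^ (r - s) := by
  have hmem : 2 ^ (r - s) ∈ {k | ∃ p : MvPolynomial (Fin r) (ZMod 2), p.totalDegree ≤ s ∧
      (fun x : Fin r → ZMod 2 => MvPolynomial.eval x p) ≠ (fun _ => (0 : ZMod 2)) ∧
      k = hammingNorm (fun x : Fin r → ZMod 2 => MvPolynomial.eval x p)} := by
    refine ⟨∏ i : Fin s, X (Fin.castLE hs i), ?_, ?_, (rm_weight r s hs).symm⟩
    · refine le_trans (totalDegree_finset_prod _ _) ?_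
      simp [totalDegree_X]
    · intro h
      have h1 := congrFun h (fun _ => 1)
      rw [map_prod] at h1
      simp only [eval_X] at h1
      simp at h1
  refine le_antisymm (Nat.sInf_le hmem) ?_
  obtain ⟨p, hd, hne, hk⟩ := Nat.sInf_mem ⟨_, hmem⟩
  rw [hk]
  exact rm_lower r s hs p hd hne
end

section
/- Let f be a Boolean function in r variables and let s be a positive integer smaller than r. Then the s-th order nonlinearity satisfies nl_s(f) ≥ (1/2)·max_{a ∈ F_2^r} nl_{s−1}(D_a f), where D_a f(x) = f(x) ⊕ f(x+a) is the Boolean derivative of f in direction a. -/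
open MvPolynomial

section Aux

variable {r : ℕ}

/-- shift-substitution `X i ↦ X i + a i`. -/
noncomputable def Sh (a : Fin r → ZMod 2) :
    MvPolynomial (Fin r) (ZMod 2) →ₐ[ZMod 2] MvPolynomial (Fin r) (ZMod 2) :=
  bind₁ (fun i => X i + C (a i))

/-- Boolean derivative on polynomials. -/
noncomputable def Dv (a : Fin r → ZMod 2) (p : MvPolynomial (Fin r) (ZMod 2)) :
    MvPolynomial (Fin r) (ZMod 2) :=
  Sh a p + p

lemma Dv_add (a : Fin r → ZMod 2) (p q : MvPolynomial (Fin r) (ZMod 2)) :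
    Dv a (p + q) = Dv a p + Dv a q := by
  simp only [Dv, map_add]; ring

lemma Dv_mul (a : Fin r → ZMod 2) (p q : MvPolynomial (Fin r) (ZMod 2)) :
    Dv a (p * q) = Dv a p * q + Sh a p * Dv a q := by
  simp only [Dv, map_mul]
  linear_combination - CharTwo.add_self_eq_zero (Sh a p * q)

lemma Dv_C (a : Fin r → ZMod 2) (c : ZMod 2) : Dv a (C c) = 0 := by
  simp only [Dv, Sh, bind₁_C_right, algebraMap_eq]
  exact CharTwo.add_self_eq_zero _

lemma totalDegree_Dv_pow (a : Fin r → ZMod 2) (i : Fin r) (k : ℕ) :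
    (Dv a (X i ^ k)).totalDegree ≤ k - 1 := by
  have hD : Dv a (X i ^ k)
      = (∑ j ∈ Finset.range k,
          (X i + C (a i)) ^ j * X i ^ (k - 1 - j)) * C (a i) := by
    have hg := geom_sum₂_mul (X i + C (a i)) (X i : MvPolynomial (Fin r) (ZMod 2)) k
    have hsub : (X i + C (a i)) - X i = (C (a i) : MvPolynomial (Fin r) (ZMod 2)) := by ring
    rw [hsub] at hg
    have : Dv a (X i ^ k) = (X i + C (a i)) ^ k - X i ^ k := by
      simp only [Dv, Sh, map_pow, bind₁_X_right, sub_eq_add_neg, CharTwo.neg_eq]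
    rw [this, ← hg]
  rw [hD]
  refine (totalDegree_mul _ _).trans ?_
  rw [totalDegree_C, add_zero]
  refine (totalDegree_finset_sum _ _).trans (Finset.sup_le fun j hj => ?_)
  refine (totalDegree_mul _ _).trans ?_
  have h1 : ((X i + C (a i) : MvPolynomial (Fin r) (ZMod 2)) ^ j).totalDegree ≤ j := by
    refine (totalDegree_pow _ _).trans ?_
    have h0 : (X i + C (a i) : MvPolynomial (Fin r) (ZMod 2)).totalDegree ≤ 1 := by
      refine (totalDegree_add _ _).trans ?_
      simp [totalDegree_X, totalDegree_C]
    calc j * (X i + C (a i) : MvPolynomial (Fin r) (ZMod 2)).totalDegree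
        ≤ j * 1 := Nat.mul_le_mul_left _ h0
      _ = j := Nat.mul_one _
  have h2 : ((X i : MvPolynomial (Fin r) (ZMod 2)) ^ (k - 1 - j)).totalDegree ≤ k - 1 - j := by
    refine (totalDegree_pow _ _).trans ?_
    simp [totalDegree_X]
  have hj' : j < k := Finset.mem_range.mp hj
  omega

lemma totalDegree_Sh_pow (a : Fin r → ZMod 2) (i : Fin r) (k : ℕ) :
    (Sh a (X i ^ k)).totalDegree ≤ k := by
  have : Sh a (X i ^ k) = (X i + C (a i)) ^ k := by
    simp [Sh, map_pow]
  rw [this]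
  refine (totalDegree_pow _ _).trans ?_
  have h0 : (X i + C (a i) : MvPolynomial (Fin r) (ZMod 2)).totalDegree ≤ 1 := by
    refine (totalDegree_add _ _).trans ?_
    simp [totalDegree_X, totalDegree_C]
  calc k * (X i + C (a i) : MvPolynomial (Fin r) (ZMod 2)).totalDegree
      ≤ k * 1 := Nat.mul_le_mul_left _ h0
    _ = k := Nat.mul_one _

lemma totalDegree_Dv_monomial (a : Fin r → ZMod 2) (m : Fin r →₀ ℕ) (c : ZMod 2) :
    (Dv a (monomial m c)).totalDegree ≤ (m.sum fun _ e => e) - 1 := by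
  induction m using Finsupp.induction generalizing c with
  | zero =>
      rw [monomial_zero', Dv_C]
      simp
  | single_add i k m hi hk ih =>
      have hmon : (monomial (Finsupp.single i k + m) c : MvPolynomial (Fin r) (ZMod 2))
          = X i ^ k * monomial m c := by
        rw [X_pow_eq_monomial, monomial_mul, one_mul]
      have hsum : ((Finsupp.single i k + m).sum fun _ e => e)
          = k + (m.sum fun _ e => e) := by
        rw [Finsupp.sum_add_index (by simp) (by simp)]
        simp [Finsupp.sum_single_index]
      rw [hmon, Dv_mul, hsum]
      refine (totalDegree_add _ _).trans (max_le ?_ ?_)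
      · refine (totalDegree_mul _ _).trans ?_
        have := totalDegree_Dv_pow a i k
        have hm := totalDegree_monomial_le m c
        have hms : (monomial m c : MvPolynomial (Fin r) (ZMod 2)).totalDegree
            ≤ m.sum fun _ e => e := hm
        omega
      · rcases eq_or_ne m 0 with rfl | hm0
        · rw [monomial_zero', Dv_C, mul_zero]
          simp only [totalDegree_zero]
          omega
        · refine (totalDegree_mul _ _).trans ?_
          have h1 := totalDegree_Sh_pow a i k
          have h2 := ih c
          have hpos : 0 < m.sum fun _ e => e := by
            rcases Finsupp.support_nonempty_iff.mpr hm0 with ⟨j, hj⟩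
            have : 0 < m j := Nat.pos_of_ne_zero (Finsupp.mem_support_iff.mp hj)
            have : m j ≤ m.sum fun _ e => e := by
              rw [Finsupp.sum]
              exact Finset.single_le_sum (fun _ _ => Nat.zero_le _) hj
            omega
          omega

end Aux

section Main

variable {r : ℕ}

lemma totalDegree_Dv (a : Fin r → ZMod 2) (p : MvPolynomial (Fin r) (ZMod 2)) :
    (Dv a p).totalDegree ≤ p.totalDegree - 1 := by
  induction p using MvPolynomial.monomial_add_induction_on with
  | C c => rw [show ((C c : MvPolynomial (Fin r) (ZMod 2))) = C c from rfl, Dv_C]; simp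
  | monomial_add u b g hu hb ih =>
      show (Dv a ((monomial u b : MvPolynomial (Fin r) (ZMod 2))
          + (show MvPolynomial (Fin r) (ZMod 2) from g))).totalDegree
        ≤ MvPolynomial.totalDegree ((monomial u b : MvPolynomial (Fin r) (ZMod 2))
          + (show MvPolynomial (Fin r) (ZMod 2) from g)) - 1
      set G : MvPolynomial (Fin r) (ZMod 2) := (show MvPolynomial (Fin r) (ZMod 2) from g) with hGdef
      set p : MvPolynomial (Fin r) (ZMod 2) := monomial u b + G with hp
      have huG : u ∉ G.support := hu
      have ihG : (Dv a G).totalDegree ≤ G.totalDegree - 1 := ih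
      have hcu : coeff u p = b := by
        rw [hp, coeff_add, coeff_monomial, if_pos rfl,
          notMem_support_iff.mp huG, add_zero]
      have hu_deg : (u.sum fun _ e => e) ≤ p.totalDegree :=
        le_totalDegree (mem_support_iff.mpr (by rw [hcu]; exact hb))
      have hg_deg : G.totalDegree ≤ p.totalDegree := by
        refine Finset.sup_le fun v hv => ?_
        have hvu : v ≠ u := fun h => huG (h ▸ hv)
        have hcv : coeff v p = coeff v G := by
          rw [hp, coeff_add, coeff_monomial, if_neg (fun h => hvu h.symm), zero_add]
        exact le_totalDegree (mem_support_iff.mpr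
          (by rw [hcv]; exact mem_support_iff.mp hv))
      have := totalDegree_Dv_monomial a u b
      calc (Dv a p).totalDegree
          ≤ max (Dv a (monomial u b)).totalDegree (Dv a G).totalDegree := by
            rw [hp, Dv_add]; exact totalDegree_add _ _
        _ ≤ p.totalDegree - 1 := max_le (by omega) (by omega)


end Main

lemma eval_Dv {r : ℕ} (a : Fin r → ZMod 2) (p : MvPolynomial (Fin r) (ZMod 2))
    (x : Fin r → ZMod 2) :
    eval x (Dv a p) = eval x p + eval (x + a) p := by
  have h1 : eval x (Sh a p) = eval (x + a) p := by
    have h := eval₂Hom_bind₁ (RingHom.id (ZMod 2)) x (fun i => X i + C (a i)) p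
    rw [show x + a = fun i => x i + a i from rfl]
    simpa [Sh] using h
  rw [Dv, map_add, h1, add_comm]

lemma ham_le {r : ℕ} (a : Fin r → ZMod 2) (p : MvPolynomial (Fin r) (ZMod 2))
    (f : (Fin r → ZMod 2) → ZMod 2) :
    hammingDist (fun x => eval x (Dv a p)) (fun x => f x + f (x + a))
      ≤ 2 * hammingDist (fun x => eval x p) f := by
  classical
  simp only [hammingDist]
  set B := Finset.univ.filter (fun x : Fin r → ZMod 2 => eval x p ≠ f x) with hB
  have haa : ∀ x : Fin r → ZMod 2, x + a + a = x := by
    intro x; funext i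
    simp [add_assoc, CharTwo.add_self_eq_zero]
  have hsub : (Finset.univ.filter
      fun x : Fin r → ZMod 2 => eval x (Dv a p) ≠ f x + f (x + a))
      ⊆ B ∪ B.image (· + a) := by
    intro x hx
    simp only [Finset.mem_filter, Finset.mem_univ, true_and] at hx
    rw [eval_Dv] at hx
    by_cases h1 : eval x p = f x
    · have h2 : eval (x + a) p ≠ f (x + a) := by
        intro h2; apply hx; rw [h1, h2]
      refine Finset.mem_union_right _ ?_
      refine Finset.mem_image.mpr ⟨x + a, ?_, haa x⟩
      simp only [hB, Finset.mem_filter, Finset.mem_univ, true_and]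
      exact h2
    · refine Finset.mem_union_left _ ?_
      simp only [hB, Finset.mem_filter, Finset.mem_univ, true_and]
      exact h1
  calc (Finset.univ.filter
        fun x : Fin r → ZMod 2 => eval x (Dv a p) ≠ f x + f (x + a)).card
      ≤ (B ∪ B.image (· + a)).card := Finset.card_le_card hsub
    _ ≤ B.card + (B.image (· + a)).card := Finset.card_union_le _ _
    _ ≤ B.card + B.card := by
        have := Finset.card_image_le (s := B) (f := (· + a)); omega
    _ = 2 * B.card := by ring

/-- The `s`-th order nonlinearity of a Boolean function `f` in `r` variables:
the minimum Hamming distance from the evaluation vector of `f` to the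
Reed–Muller code `RM(s,r)`. -/
noncomputable def nl {r : ℕ} (s : ℕ) (f : (Fin r → ZMod 2) → ZMod 2) : ℕ :=
  sInf {k | ∃ p : MvPolynomial (Fin r) (ZMod 2), p.totalDegree ≤ s ∧
    k = hammingDist (fun x => MvPolynomial.eval x p) f}

lemma nl_deriv_le {r : ℕ} (s : ℕ) (f : (Fin r → ZMod 2) → ZMod 2)
    (a : Fin r → ZMod 2) :
    nl (s - 1) (fun x => f x + f (x + a)) ≤ 2 * nl s f := by
  have hmem : nl s f ∈ {k | ∃ p : MvPolynomial (Fin r) (ZMod 2), p.totalDegree ≤ s ∧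
      k = hammingDist (fun x => MvPolynomial.eval x p) f} := by
    apply Nat.sInf_mem
    exact ⟨_, ⟨0, by simp, rfl⟩⟩
  obtain ⟨p, hdeg, heq⟩ := hmem
  have hq : (Dv a p).totalDegree ≤ s - 1 :=
    (totalDegree_Dv a p).trans (Nat.sub_le_sub_right hdeg 1)
  have h1 : nl (s - 1) (fun x => f x + f (x + a))
      ≤ hammingDist (fun x => eval x (Dv a p)) (fun x => f x + f (x + a)) :=
    Nat.sInf_le ⟨Dv a p, hq, rfl⟩
  calc nl (s - 1) (fun x => f x + f (x + a))
      ≤ hammingDist (fun x => eval x (Dv a p)) (fun x => f x + f (x + a)) := h1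
    _ ≤ 2 * hammingDist (fun x => eval x p) f := ham_le a p f
    _ = 2 * nl s f := by rw [← heq]

/-- `nl_s(f) ≥ (1/2)·max_{a ∈ F_2^r} nl_{s−1}(D_a f)`, where
`D_a f(x) = f(x) ⊕ f(x+a)` is the Boolean derivative of `f` in direction `a`. -/
theorem stmt6 (r s : ℕ) (hs : 0 < s) (hsr : s < r)
    (f : (Fin r → ZMod 2) → ZMod 2) :
    (1 / 2 : ℝ) * (Finset.univ.sup' Finset.univ_nonempty
        fun a : Fin r → ZMod 2 => (nl (s - 1) (fun x => f x + f (x + a)) : ℝ))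
      ≤ (nl s f : ℝ) := by
  have hsup : (Finset.univ.sup' Finset.univ_nonempty
      fun a : Fin r → ZMod 2 => (nl (s - 1) (fun x => f x + f (x + a)) : ℝ))
      ≤ 2 * (nl s f : ℝ) := by
    refine Finset.sup'_le _ _ fun a _ => ?_
    have := nl_deriv_le s f a
    exact_mod_cast this
  linarith
end

section
/- Let f be a Boolean function in r variables and s a positive integer smaller than r. Then nl_s(f) ≥ 2^{r−1} − (1/2)·sqrt(2^{2r} − 2·Σ_{a ∈ F_2^r} nl_{s−1}(D_a f)). -/
namespace Stmt7Aux

open MvPolynomial Finset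

noncomputable def chi (b : ZMod 2) : ℝ := (-1 : ℝ) ^ b.val

lemma chi_add (a b : ZMod 2) : chi (a + b) = chi a * chi b := by
  unfold chi
  have h2 : ∀ c : ZMod 2, c = 0 ∨ c = 1 := by decide
  rcases h2 a with rfl | rfl <;> rcases h2 b with rfl | rfl <;>
    norm_num [ZMod.val_one, show (1 : ZMod 2) + 1 = 0 from rfl, show ZMod.val (2 : ZMod 2) = 0 from rfl]

lemma chi_eq (a b : ZMod 2) :
    chi (a + b) = 1 - 2 * (if a ≠ b then (1 : ℝ) else 0) := by
  unfold chi
  have h2 : ∀ c : ZMod 2, c = 0 ∨ c = 1 := by decide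
  rcases h2 a with rfl | rfl <;> rcases h2 b with rfl | rfl <;>
    norm_num [ZMod.val_one, show (1 : ZMod 2) + 1 = 0 from rfl, show ZMod.val (2 : ZMod 2) = 0 from rfl]

lemma sum_chi {V : Type*} [Fintype V] (u v : V → ZMod 2) :
    ∑ x, chi (u x + v x) = (Fintype.card V : ℝ) - 2 * hammingDist u v := by
  rw [Finset.sum_congr rfl fun x _ => chi_eq (u x) (v x)]
  rw [Finset.sum_sub_distrib, Finset.sum_const, nsmul_eq_mul, mul_one,
    ← Finset.mul_sum, Finset.sum_boole, Finset.card_univ]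
  norm_num [hammingDist]

lemma sq_sum {r : ℕ} (g : (Fin r → ZMod 2) → ZMod 2) :
    (∑ x, chi (g x)) ^ 2 = ∑ a, ∑ x, chi (g x + g (x + a)) := by
  rw [sq, Finset.sum_mul_sum]
  have h1 : ∀ x : Fin r → ZMod 2,
      ∑ y, chi (g x) * chi (g y) = ∑ a, chi (g x + g (x + a)) := fun x =>
    (Fintype.sum_equiv (Equiv.addLeft x)
      (fun a => chi (g x + g (x + a))) (fun y => chi (g x) * chi (g y))
      (fun a => chi_add (g x) (g (x + a)))).symm
  rw [Finset.sum_congr rfl fun x _ => h1 x, Finset.sum_comm]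

lemma small_add {r : ℕ} {p q : MvPolynomial (Fin r) (ZMod 2)} {d : ℕ}
    (hp : p = 0 ∨ p.totalDegree < d) (hq : q = 0 ∨ q.totalDegree < d) :
    p + q = 0 ∨ (p + q).totalDegree < d := by
  rcases hp with h | h <;> rcases hq with h' | h'
  · left; simp [h, h']
  · right; simpa [h]
  · right; simpa [h']
  · right; exact lt_of_le_of_lt (totalDegree_add p q) (max_lt h h')

lemma small_mul_left {r : ℕ} {p q : MvPolynomial (Fin r) (ZMod 2)} {m d : ℕ}
    (hp : p.totalDegree ≤ m) (hq : q = 0 ∨ q.totalDegree < d) :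
    p * q = 0 ∨ (p * q).totalDegree < m + d := by
  rcases hq with h | h
  · left; simp [h]
  · right
    refine lt_of_le_of_lt (totalDegree_mul p q) ?_
    omega

lemma small_mul_right {r : ℕ} {p q : MvPolynomial (Fin r) (ZMod 2)} {m d : ℕ}
    (hp : p = 0 ∨ p.totalDegree < m) (hq : q.totalDegree ≤ d) :
    p * q = 0 ∨ (p * q).totalDegree < m + d := by
  rcases hp with h | h
  · left; simp [h]
  · right
    refine lt_of_le_of_lt (totalDegree_mul p q) ?_
    omega

lemma pow_aux {r : ℕ} (j : Fin r) (c : ZMod 2) (n : ℕ) :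
    ∃ F : MvPolynomial (Fin r) (ZMod 2),
      (X j + C c) ^ n = X j ^ n + F ∧ (F = 0 ∨ F.totalDegree < n) := by
  induction n with
  | zero => exact ⟨0, by simp, Or.inl rfl⟩
  | succ n ih =>
    obtain ⟨F, hF, hFd⟩ := ih
    refine ⟨X j ^ n * C c + F * (X j + C c), ?_, ?_⟩
    · rw [pow_succ, hF]; ring
    · apply small_add
      · right
        refine lt_of_le_of_lt (totalDegree_mul _ _) ?_
        have h1 : (X j ^ n : MvPolynomial (Fin r) (ZMod 2)).totalDegree = n :=
          totalDegree_X_pow j n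
        have h2 : (C c : MvPolynomial (Fin r) (ZMod 2)).totalDegree = 0 :=
          totalDegree_C c
        omega
      · have hdeg : (X j + C c : MvPolynomial (Fin r) (ZMod 2)).totalDegree ≤ 1 := by
          refine le_trans (totalDegree_add _ _) ?_
          simp [totalDegree_X, totalDegree_C]
        exact small_mul_right hFd hdeg

lemma prod_aux {r : ℕ} (a : Fin r → ZMod 2) (u : Fin r →₀ ℕ) :
    ∃ E : MvPolynomial (Fin r) (ZMod 2),
      (∏ i, (X i + C (a i)) ^ u i) = monomial u 1 + E ∧
      (E = 0 ∨ E.totalDegree < u.sum fun _ n => n) := by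
  induction u using Finsupp.induction with
  | zero => exact ⟨0, by simp, Or.inl rfl⟩
  | single_add j n v hj hn ih =>
    obtain ⟨E, hE, hEd⟩ := ih
    obtain ⟨F, hF, hFd⟩ := pow_aux j (a j) n
    have hsum : ((Finsupp.single j n + v).sum fun _ n => n)
        = n + v.sum fun _ n => n := by
      rw [Finsupp.sum_add_index' (fun _ => rfl) (fun _ _ _ => rfl),
        Finsupp.sum_single_index rfl]
    refine ⟨X j ^ n * E + F * monomial v 1 + F * E, ?_, ?_⟩
    · have hsplit : (∏ i, (X i + C (a i)) ^ (Finsupp.single j n + v) i)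
          = (X j + C (a j)) ^ n * ∏ i, (X i + C (a i)) ^ v i := by
        calc (∏ i, (X i + C (a i)) ^ (Finsupp.single j n + v) i)
            = ∏ i, ((X i + C (a i)) ^ (Finsupp.single j n) i
                * (X i + C (a i)) ^ v i) := by
              refine Finset.prod_congr rfl fun i _ => ?_
              rw [Finsupp.add_apply, pow_add]
          _ = (∏ i, (X i + C (a i)) ^ (Finsupp.single j n) i)
                * ∏ i, (X i + C (a i)) ^ v i := Finset.prod_mul_distrib
          _ = (X j + C (a j)) ^ n * ∏ i, (X i + C (a i)) ^ v i := by
              rw [Fintype.prod_eq_single j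
                (fun i hi => by
                  rw [Finsupp.single_eq_of_ne hi, pow_zero]),
                Finsupp.single_eq_same]
      rw [hsplit, hF, hE]
      have hm : (monomial (Finsupp.single j n + v) (1 : ZMod 2))
          = X j ^ n * monomial v 1 := by
        rw [X_pow_eq_monomial, monomial_mul, one_mul]
      rw [hm]; ring
    · rw [hsum]
      refine small_add (small_add ?_ ?_) ?_
      · exact small_mul_left (le_of_eq (totalDegree_X_pow j n)) hEd
      · refine small_mul_right hFd ?_
        exact totalDegree_monomial_le v 1
      · rcases hEd with h | h
        · left; simp [h]
        · exact small_mul_right hFd (le_of_lt h)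

lemma main_deg {r s : ℕ} (hs : 0 < s) (a : Fin r → ZMod 2)
    (p : MvPolynomial (Fin r) (ZMod 2)) (hp : p.totalDegree ≤ s) :
    ∃ q : MvPolynomial (Fin r) (ZMod 2), q.totalDegree ≤ s - 1 ∧
      ∀ x, eval x q = eval x p + eval (x + a) p := by
  refine ⟨p + bind₁ (fun i => X i + C (a i)) p, ?_, ?_⟩
  · have hrw : p + bind₁ (fun i => X i + C (a i)) p
        = ∑ u ∈ p.support, (monomial u (coeff u p)
            + bind₁ (fun i => X i + C (a i)) (monomial u (coeff u p))) := by
      rw [Finset.sum_add_distrib, ← map_sum, ← as_sum]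
    rw [hrw]
    refine le_trans (totalDegree_finset_sum _ _) (Finset.sup_le fun u hu => ?_)
    have hu' : (u.sum fun _ n => n) ≤ s := le_trans (le_totalDegree hu) hp
    obtain ⟨E, hE, hEd⟩ := prod_aux a u
    have hprod : (∏ i ∈ u.support, (X i + C (a i)) ^ u i)
        = ∏ i : Fin r, (X i + C (a i)) ^ u i :=
      Finset.prod_subset (Finset.subset_univ _) (fun i _ hi => by
        rw [Finsupp.notMem_support_iff.mp hi, pow_zero])
    have hb : bind₁ (fun i => X i + C (a i)) (monomial u (coeff u p))
        = C (coeff u p) * (monomial u 1 + E) := by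
      rw [bind₁_monomial, hprod, hE]
    have hz : ∀ z : ZMod 2, z + z = 0 := by decide
    have hterm : monomial u (coeff u p)
        + bind₁ (fun i => X i + C (a i)) (monomial u (coeff u p))
        = C (coeff u p) * E := by
      rw [hb, mul_add, C_mul_monomial, mul_one, ← add_assoc, ← map_add,
        hz (coeff u p), map_zero, zero_add]
    rw [hterm]
    have hCE : (C (coeff u p) * E).totalDegree ≤ E.totalDegree := by
      refine le_trans (totalDegree_mul _ _) ?_
      simp [totalDegree_C]
    rcases hEd with h | h
    · simp [h]
    · omega
  · intro x
    rw [map_add]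
    congr 1
    have h2 : (fun i => eval x (X i + C (a i))) = x + a := by
      funext i; simp
    calc eval x (bind₁ (fun i => X i + C (a i)) p)
        = eval₂Hom (RingHom.id (ZMod 2)) x (bind₁ (fun i => X i + C (a i)) p) := rfl
      _ = eval₂Hom (RingHom.id (ZMod 2))
            (fun i => eval₂Hom (RingHom.id (ZMod 2)) x (X i + C (a i))) p :=
          eval₂Hom_bind₁ _ _ _ _
      _ = eval (fun i => eval x (X i + C (a i))) p := rfl
      _ = eval (x + a) p := by rw [h2]

end Stmt7Aux

open MvPolynomial Finset Stmt7Aux in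
/-- `nl_s(f) ≥ 2^{r−1} − (1/2)·sqrt(2^{2r} − 2·Σ_{a ∈ F_2^r} nl_{s−1}(D_a f))`,
where `D_a f(x) = f(x) ⊕ f(x+a)` is the Boolean derivative. -/
theorem stmt7 (r s : ℕ) (hs : 0 < s) (hsr : s < r)
    (f : (Fin r → ZMod 2) → ZMod 2) :
    (2 : ℝ) ^ (r - 1) - (1 / 2) * Real.sqrt ((2 : ℝ) ^ (2 * r)
        - 2 * ∑ a : Fin r → ZMod 2, (nl (s - 1) (fun x => f x + f (x + a)) : ℝ))
      ≤ (nl s f : ℝ) := by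
  classical
  have hne : {k | ∃ p : MvPolynomial (Fin r) (ZMod 2), p.totalDegree ≤ s ∧
      k = hammingDist (fun x => MvPolynomial.eval x p) f}.Nonempty :=
    ⟨hammingDist (fun x => MvPolynomial.eval x (0 : MvPolynomial (Fin r) (ZMod 2))) f,
      0, by simp, rfl⟩
  have hmem : nl s f ∈ {k | ∃ p : MvPolynomial (Fin r) (ZMod 2),
      p.totalDegree ≤ s ∧
      k = hammingDist (fun x => MvPolynomial.eval x p) f} := by
    have h0 : nl s f = sInf {k | ∃ p : MvPolynomial (Fin r) (ZMod 2),
        p.totalDegree ≤ s ∧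
        k = hammingDist (fun x => MvPolynomial.eval x p) f} := rfl
    rw [h0]
    exact Nat.sInf_mem hne
  obtain ⟨p₀, hdeg, hdist⟩ := hmem
  have card2 : (Fintype.card (Fin r → ZMod 2) : ℝ) = 2 ^ r := by simp
  have key1 : ∑ x, chi (eval x p₀ + f x) = (2 : ℝ) ^ r - 2 * (nl s f : ℝ) := by
    have := sum_chi (fun x => eval x p₀) f
    rw [card2] at this
    rw [this, hdist]
  have key2 : ((2 : ℝ) ^ r - 2 * (nl s f : ℝ)) ^ 2
      = ∑ a, ∑ x, chi ((eval x p₀ + f x) + (eval (x + a) p₀ + f (x + a))) := by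
    rw [← key1]
    exact sq_sum (fun x => eval x p₀ + f x)
  have key3 : ∀ a : Fin r → ZMod 2,
      ∑ x, chi ((eval x p₀ + f x) + (eval (x + a) p₀ + f (x + a)))
        ≤ (2 : ℝ) ^ r - 2 * (nl (s - 1) (fun x => f x + f (x + a)) : ℝ) := by
    intro a
    obtain ⟨q, hqdeg, hqe⟩ := main_deg hs a p₀ hdeg
    have harg : ∀ x, (eval x p₀ + f x) + (eval (x + a) p₀ + f (x + a))
        = eval x q + (f x + f (x + a)) := by
      intro x; rw [hqe x]; ring
    rw [Finset.sum_congr rfl fun x _ => by rw [harg x]]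
    have hsum := sum_chi (fun x => eval x q) (fun x => f x + f (x + a))
    rw [card2] at hsum
    rw [hsum]
    have hle : nl (s - 1) (fun x => f x + f (x + a))
        ≤ hammingDist (fun x => eval x q) (fun x => f x + f (x + a)) :=
      Nat.sInf_le ⟨q, hqdeg, rfl⟩
    have hle' : ((nl (s - 1) (fun x => f x + f (x + a)) : ℕ) : ℝ)
        ≤ hammingDist (fun x => eval x q) (fun x => f x + f (x + a)) :=
      Nat.cast_le.mpr hle
    linarith
  have key4 : ((2 : ℝ) ^ r - 2 * (nl s f : ℝ)) ^ 2
      ≤ (2 : ℝ) ^ (2 * r)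
        - 2 * ∑ a : Fin r → ZMod 2, (nl (s - 1) (fun x => f x + f (x + a)) : ℝ) := by
    rw [key2]
    calc (∑ a, ∑ x, chi ((eval x p₀ + f x) + (eval (x + a) p₀ + f (x + a))))
        ≤ ∑ a : Fin r → ZMod 2,
            ((2 : ℝ) ^ r - 2 * (nl (s - 1) (fun x => f x + f (x + a)) : ℝ)) :=
          Finset.sum_le_sum fun a _ => key3 a
      _ = (2 : ℝ) ^ (2 * r)
          - 2 * ∑ a : Fin r → ZMod 2, (nl (s - 1) (fun x => f x + f (x + a)) : ℝ) := by
          have hp2 : (2 : ℝ) ^ (2 * r) = 2 ^ r * 2 ^ r := by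
            rw [two_mul, pow_add]
          rw [Finset.sum_sub_distrib, Finset.sum_const, Finset.card_univ,
            nsmul_eq_mul, ← Finset.mul_sum, card2, hp2]
  have hsq := Real.sqrt_le_sqrt key4
  rw [Real.sqrt_sq_eq_abs] at hsq
  have habs : (2 : ℝ) ^ r - 2 * (nl s f : ℝ)
      ≤ |(2 : ℝ) ^ r - 2 * (nl s f : ℝ)| := le_abs_self _
  have hpow : (2 : ℝ) ^ (r - 1) * 2 = 2 ^ r := by
    rw [← pow_succ]
    congr 1
    omega
  linarith
end

section
/- Let A_1,…,A_n be real 3×3 matrices each of whose singular values are bounded by s_1 ≥ s_2 ≥ s_3 ≥ 0 (i.e., the j-th singular value of each A_i is at most s_j). Then |tr(A_1 A_2 ⋯ A_n)| ≤ s_1^n + s_2^n + s_3^n. -/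
open Matrix Complex Polynomial
set_option maxHeartbeats 1000000


lemma two_var (a b B1 B2 : ℝ) (hba : b ≤ a) (hB2 : 0 ≤ B2)
    (h1 : a ≤ B1) (h12 : a*b ≤ B1*B2) : a + b ≤ B1 + B2 := by
  rcases le_or_gt b B2 with h | h
  · linarith
  · have hb0 : 0 < b := lt_of_le_of_lt hB2 h
    have h2 : (B1 - b) * (b - B2) ≥ 0 :=
      mul_nonneg (by linarith) (by linarith)
    have : (a + b - B1 - B2) * b ≤ 0 := by nlinarith
    nlinarith

lemma sorted3 (a b c B1 B2 B3 : ℝ) (hc : 0 ≤ c) (hcb : c ≤ b) (hba : b ≤ a)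
    (hB3 : 0 ≤ B3) (hB32 : B3 ≤ B2) (hB21 : B2 ≤ B1)
    (h1 : a ≤ B1) (h12 : a*b ≤ B1*B2) (h123 : a*b*c ≤ B1*B2*B3) :
    a + b + c ≤ B1 + B2 + B3 := by
  rcases le_or_gt c B3 with h3 | h3
  · have := two_var a b B1 B2 hba (hB3.trans hB32) h1 h12
    linarith
  have hc0 : 0 < c := lt_of_le_of_lt hB3 h3
  rcases le_or_gt c B2 with h2 | h2
  · -- B3 < c ≤ B2
    have hY : (0:ℝ) ≤ B2*B3/c := div_nonneg (mul_nonneg (hB3.trans hB32) hB3) hc0.le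
    have hab : a*b ≤ B1*(B2*B3/c) := by
      rw [mul_div_assoc', le_div_iff₀ hc0]; nlinarith
    have := two_var a b B1 (B2*B3/c) hba hY h1 hab
    have hfin : B2*B3/c + c ≤ B2 + B3 := by
      rw [div_add' _ _ _ hc0.ne', div_le_iff₀ hc0]; nlinarith
    linarith
  · -- c > B2
    set K := B1*B2*B3 with hK
    have hb0 : 0 < b := hc0.trans_le hcb
    have ha0 : 0 < a := hb0.trans_le hba
    have hB20 : 0 < B2 := by
      rcases (hB3.trans hB32).lt_or_eq with h | h
      · exact h
      · exfalso
        have hB30 : B3 = 0 := le_antisymm (hB32.trans h.symm.le) hB3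
        nlinarith [mul_pos (mul_pos ha0 hb0) hc0]
    have hcc : c*c ≤ a*b := mul_le_mul (hcb.trans hba) hcb hc ha0.le
    have hcK : c^3 ≤ K := by nlinarith [mul_le_mul_of_nonneg_right hcc hc]
    have hbc : b*c ≤ a*b := by nlinarith
    have hbc2 : b*c^2 ≤ K := by nlinarith [mul_le_mul_of_nonneg_right hbc hc]
    have habc2 : (a+b)*c^2 ≤ K + c^3 := by
      have step : (a+b)*(b*c^2) ≤ (K + c^3)*b := by
        nlinarith [mul_nonneg (sub_nonneg.2 hcb) (sub_nonneg.2 hbc2)]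
      have h' : (a+b)*c^2*b ≤ (K + c^3)*b := by nlinarith
      exact le_of_mul_le_mul_right h' hb0
    have hfinal : K + 2*c^3 ≤ (B1+B2+B3)*c^2 := by
      have H1 : 0 ≤ c^2*B2*((B1-B2)*(B2-B3)) := by
        apply mul_nonneg (mul_nonneg (sq_nonneg c) hB20.le)
        exact mul_nonneg (by linarith) (by linarith)
      have hKc2B2 : c^2*B2 ≤ K := by nlinarith
      have hsq : B2^2 ≤ c^2 := by nlinarith
      have hKcB22 : c*B2^2 ≤ K := by nlinarith [mul_le_mul_of_nonneg_left hsq hc0.le]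
      have e1 : c^3*c ≤ K*c := mul_le_mul_of_nonneg_right hcK hc0.le
      have e2 : c^2*B2^2 ≤ c^2*c^2 := mul_le_mul_of_nonneg_left hsq (sq_nonneg c)
      have H2 : 0 ≤ (c-B2)*(K*c - c^2*B2^2) := by
        apply mul_nonneg (by linarith)
        have : c^2*c^2 = c^3*c := by ring
        linarith
      have e3 : c^2*B2*B2 ≤ K*B2 := mul_le_mul_of_nonneg_right hKc2B2 hB20.le
      have H3 : 0 ≤ (c-B2)*(K*B2 - c^2*B2^2) := by
        apply mul_nonneg (by linarith)
        have : c^2*B2*B2 = c^2*B2^2 := by ring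
        linarith
      have hmul : (K + 2*c^3)*B2^2 ≤ (B1+B2+B3)*c^2*B2^2 := by
        rw [hK] at H2 H3 ⊢; linarith [H1, H2, H3]
      calc K + 2*c^3 = (K + 2*c^3)*B2^2/B2^2 := by field_simp
        _ ≤ (B1+B2+B3)*c^2*B2^2/B2^2 := by
            apply div_le_div_of_nonneg_right ?_ (by positivity)
            exact hmul
        _ = (B1+B2+B3)*c^2 := by field_simp
    have hstep : (a+b+c)*c^2 ≤ (B1+B2+B3)*c^2 := by nlinarith
    exact le_of_mul_le_mul_right hstep (by positivity)

lemma key3 (a b c B1 B2 B3 : ℝ) (ha : 0 ≤ a) (hb : 0 ≤ b) (hc : 0 ≤ c)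
    (hB3 : 0 ≤ B3) (hB32 : B3 ≤ B2) (hB21 : B2 ≤ B1)
    (h1 : a ≤ B1) (h2 : b ≤ B1) (h3 : c ≤ B1)
    (h12 : a*b ≤ B1*B2) (h13 : a*c ≤ B1*B2) (h23 : b*c ≤ B1*B2)
    (h123 : a*b*c ≤ B1*B2*B3) : a + b + c ≤ B1 + B2 + B3 := by
  rcases le_total a b with hab | hab
  · rcases le_total b c with hbc | hbc
    · have := sorted3 c b a B1 B2 B3 ha hab hbc hB3 hB32 hB21 h3
        (by nlinarith [h23]) (by nlinarith [h123]); linarith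
    · rcases le_total a c with hac | hac
      · have := sorted3 b c a B1 B2 B3 ha hac hbc hB3 hB32 hB21 h2
          (by nlinarith [h23]) (by nlinarith [h123]); linarith
      · have := sorted3 b a c B1 B2 B3 hc hac hab hB3 hB32 hB21 h2
          (by nlinarith [h12]) (by nlinarith [h123]); linarith
  · rcases le_total b c with hbc | hbc
    · rcases le_total a c with hac | hac
      · have := sorted3 c a b B1 B2 B3 hb hab hac hB3 hB32 hB21 h3
          (by nlinarith [h13]) (by nlinarith [h123]); linarith
      · have := sorted3 a c b B1 B2 B3 hb hbc hac hB3 hB32 hB21 h1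
          (by nlinarith [h13]) (by nlinarith [h123]); linarith
    · have := sorted3 a b c B1 B2 B3 hc hbc hab hB3 hB32 hB21 h1
        (by nlinarith [h12]) (by nlinarith [h123]); linarith


noncomputable def sqn (v : Fin 3 → ℂ) : ℝ := ∑ i, Complex.normSq (v i)

lemma sqn_nonneg (v : Fin 3 → ℂ) : 0 ≤ sqn v :=
  Finset.sum_nonneg fun i _ => Complex.normSq_nonneg _

lemma sqn_pos {v : Fin 3 → ℂ} (hv : v ≠ 0) : 0 < sqn v := by
  rcases (sqn_nonneg v).lt_or_eq with h | h
  · exact h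
  · exfalso; apply hv
    have := (Finset.sum_eq_zero_iff_of_nonneg
      (fun i _ => Complex.normSq_nonneg (v i))).mp h.symm
    funext i
    exact Complex.normSq_eq_zero.mp (this i (Finset.mem_univ i))

lemma dot_eq_sqn (v : Fin 3 → ℂ) : star v ⬝ᵥ v = (sqn v : ℂ) := by
  simp only [dotProduct, sqn, Pi.star_apply]
  push_cast
  refine Finset.sum_congr rfl fun i _ => ?_
  rw [show star (v i) = (starRingEnd ℂ) (v i) from rfl, ← Complex.normSq_eq_conj_mul_self]

lemma sqn_smul (z : ℂ) (v : Fin 3 → ℂ) : sqn (z • v) = Complex.normSq z * sqn v := by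
  simp [sqn, Complex.normSq_mul, Finset.mul_sum]

lemma sqn_mulVec_unitary {W : Matrix (Fin 3) (Fin 3) ℂ} (hW : Wᴴ * W = 1)
    (v : Fin 3 → ℂ) : sqn (W *ᵥ v) = sqn v := by
  have h : star (W *ᵥ v) ⬝ᵥ (W *ᵥ v) = star v ⬝ᵥ v := by
    rw [star_mulVec, dotProduct_mulVec, vecMul_vecMul, hW, vecMul_one]
  rw [dot_eq_sqn, dot_eq_sqn] at h
  exact_mod_cast h

/-- `M` contracts (squared) norms by factor `c`. -/
def Contr (c : ℝ) (M : Matrix (Fin 3) (Fin 3) ℂ) : Prop :=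
  ∀ v, sqn (M *ᵥ v) ≤ c^2 * sqn v

lemma contr_unitary {W : Matrix (Fin 3) (Fin 3) ℂ} (hW : Wᴴ * W = 1) : Contr 1 W :=
  fun v => by rw [sqn_mulVec_unitary hW]; simp

lemma contr_mul {c e : ℝ} {M N : Matrix (Fin 3) (Fin 3) ℂ}
    (hM : Contr c M) (hN : Contr e N) : Contr (c*e) (M*N) := by
  intro v
  have h1 : sqn ((M*N) *ᵥ v) = sqn (M *ᵥ (N *ᵥ v)) := by rw [← mulVec_mulVec]
  calc sqn ((M*N) *ᵥ v) = sqn (M *ᵥ (N *ᵥ v)) := h1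
    _ ≤ c^2 * sqn (N *ᵥ v) := hM _
    _ ≤ c^2 * (e^2 * sqn v) := by
        apply mul_le_mul_of_nonneg_left (hN v) (sq_nonneg c)
    _ = (c*e)^2 * sqn v := by ring

lemma contr_mono {c e : ℝ} {M : Matrix (Fin 3) (Fin 3) ℂ} (hM : Contr c M)
    (hc : 0 ≤ c) (hce : c ≤ e) : Contr e M := fun v =>
  (hM v).trans (mul_le_mul_of_nonneg_right (by nlinarith) (sqn_nonneg v))

lemma contr_diagonal {d : Fin 3 → ℂ} {c : ℝ} (hd : ∀ i, Complex.normSq (d i) ≤ c^2) :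
    Contr c (diagonal d) := by
  intro v
  simp only [sqn, mulVec_diagonal, Complex.normSq_mul, Finset.mul_sum]
  apply Finset.sum_le_sum fun i _ => ?_
  exact mul_le_mul_of_nonneg_right (hd i) (Complex.normSq_nonneg _)

lemma contr_eigen {c : ℝ} {M : Matrix (Fin 3) (Fin 3) ℂ} (hM : Contr c M) (hc : 0 ≤ c)
    {z : ℂ} (hz : det (z • (1 : Matrix (Fin 3) (Fin 3) ℂ) - M) = 0) :
    ‖z‖ ≤ c := by
  obtain ⟨v, hv, hMv⟩ := (Matrix.exists_mulVec_eq_zero_iff).mpr hz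
  have hMv' : M *ᵥ v = z • v := by
    have := sub_mulVec (z • (1 : Matrix (Fin 3) (Fin 3) ℂ)) M v
    rw [hMv] at this
    have h2 : (z • (1 : Matrix (Fin 3) (Fin 3) ℂ)) *ᵥ v = z • v := by
      rw [smul_mulVec, one_mulVec]
    rw [h2] at this
    exact (sub_eq_zero.mp this.symm).symm
  have h3 := hM v
  rw [hMv', sqn_smul] at h3
  have h4 : Complex.normSq z ≤ c^2 :=
    le_of_mul_le_mul_right (by linarith [h3]) (sqn_pos hv)
  have h5 : ‖z‖ ^ 2 = Complex.normSq z := Complex.sq_norm z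
  nlinarith [norm_nonneg z]

lemma contr_list_prod {c : ℝ} (hc : 0 ≤ c) (L : List (Matrix (Fin 3) (Fin 3) ℂ))
    (h : ∀ M ∈ L, Contr c M) : Contr (c ^ L.length) L.prod := by
  induction L with
  | nil => simpa using contr_unitary (W := 1) (by simp)
  | cons M L ih =>
      have := contr_mul (h M (by simp)) (ih fun N hN => h N (List.mem_cons_of_mem _ hN))
      simpa [pow_succ, mul_comm] using this

lemma contr_adj_list_prod {c : ℝ} (hc : 0 ≤ c) (L : List (Matrix (Fin 3) (Fin 3) ℂ))
    (h : ∀ M ∈ L, Contr c (adjugate M)) : Contr (c ^ L.length) (adjugate L.prod) := by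
  induction L with
  | nil => simpa [adjugate_one] using contr_unitary (W := 1) (by simp)
  | cons M L ih =>
      rw [List.prod_cons, adjugate_mul_distrib]
      have := contr_mul (ih fun N hN => h N (List.mem_cons_of_mem _ hN)) (h M (by simp))
      simpa [pow_succ] using this

noncomputable abbrev phi : Matrix (Fin 3) (Fin 3) ℝ →+* Matrix (Fin 3) (Fin 3) ℂ :=
  (Complex.ofRealHom).mapMatrix

lemma ct_map (U : Matrix (Fin 3) (Fin 3) ℝ) : (phi U)ᴴ = phi Uᵀ := by
  ext i j
  simp [conjTranspose_apply, RingHom.mapMatrix_apply, Matrix.map_apply, Complex.conj_ofReal]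

lemma unitary_map {U : Matrix (Fin 3) (Fin 3) ℝ} (hU : Uᵀ * U = 1) :
    (phi U)ᴴ * phi U = 1 := by
  rw [ct_map, ← _root_.map_mul, hU, _root_.map_one]

lemma eval_charpoly3 (M : Matrix (Fin 3) (Fin 3) ℂ) (z : ℂ) :
    M.charpoly.eval z = det (z • (1 : Matrix (Fin 3) (Fin 3) ℂ) - M) := by
  rw [Matrix.charpoly, eval_det, matPolyEquiv_charmatrix]
  congr 1
  simp only [eval_sub, eval_X, eval_C]
  congr 1
  rw [Matrix.scalar_apply]
  ext i j
  rcases eq_or_ne i j with h | h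
  · subst h; simp
  · simp [Matrix.diagonal_apply_ne _ h, Matrix.one_apply_ne h]

lemma contr_adj_unitary {W : Matrix (Fin 3) (Fin 3) ℂ} (hW : Wᴴ * W = 1) :
    Contr 1 (adjugate W) := by
  have hWW : W * Wᴴ = 1 := mul_eq_one_comm.mp hW
  have hadj : adjugate W = det W • Wᴴ := by
    calc adjugate W = adjugate W * (W * Wᴴ) := by rw [hWW, mul_one]
      _ = (adjugate W * W) * Wᴴ := by rw [mul_assoc]
      _ = det W • Wᴴ := by rw [adjugate_mul, smul_mul, one_mul]
  have hdet : Complex.normSq (det W) = 1 := by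
    have h1 : star (det W) * det W = 1 := by
      rw [← det_conjTranspose, ← det_mul, hW, det_one]
    have : ((Complex.normSq (det W) : ℂ)) = 1 := by
      rw [show star W.det = (starRingEnd ℂ) W.det from rfl,
        ← Complex.normSq_eq_conj_mul_self] at h1
      exact_mod_cast h1
    exact_mod_cast this
  have h2 : (Wᴴ)ᴴ * Wᴴ = 1 := by rw [conjTranspose_conjTranspose]; exact hWW
  intro v
  rw [hadj, smul_mulVec, sqn_smul, hdet, sqn_mulVec_unitary h2]
  simp


lemma det_id1 (M : Matrix (Fin 3) (Fin 3) ℂ) (z : ℂ) :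
    det (z • 1 - M) = z^3 - trace M * z^2 + trace (adjugate M) * z - det M := by
  simp [Matrix.det_fin_three, Matrix.adjugate_fin_three, Matrix.trace_fin_three,
    Matrix.smul_apply, Matrix.sub_apply, Matrix.one_apply]
  ring

lemma det_id2 (M : Matrix (Fin 3) (Fin 3) ℂ) (z : ℂ) :
    det (z • 1 - adjugate M) = z^3 - trace (adjugate M) * z^2 + trace M * det M * z - (det M)^2 := by
  simp [Matrix.det_fin_three, Matrix.adjugate_fin_three, Matrix.trace_fin_three,
    Matrix.smul_apply, Matrix.sub_apply, Matrix.one_apply]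
  ring

lemma contr_factor {U V : Matrix (Fin 3) (Fin 3) ℝ} {d s : Fin 3 → ℝ}
    (hU : Uᵀ * U = 1) (hV : Vᵀ * V = 1) (hd : ∀ j, 0 ≤ d j ∧ d j ≤ s j)
    (h21 : s 2 ≤ s 1) (h10 : s 1 ≤ s 0) (h2 : 0 ≤ s 2) :
    Contr (s 0) (phi (U * Matrix.diagonal d * V)) := by
  have hdm : phi (Matrix.diagonal d) = diagonal (fun j => ((d j : ℝ) : ℂ)) := by
    rw [RingHom.mapMatrix_apply, diagonal_map (by simp)]
    rfl
  have hD : Contr (s 0) (diagonal (fun j => ((d j : ℝ) : ℂ))) := by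
    apply contr_diagonal
    intro i
    have hsi : s i ≤ s 0 := by fin_cases i <;> simp_all <;> linarith
    have := hd i
    rw [Complex.normSq_ofReal]
    nlinarith
  have h := contr_mul (contr_mul (contr_unitary (unitary_map hU)) hD)
    (contr_unitary (unitary_map hV))
  rw [_root_.map_mul, _root_.map_mul, hdm]
  simpa using h

lemma contr_adj_factor {U V : Matrix (Fin 3) (Fin 3) ℝ} {d s : Fin 3 → ℝ}
    (hU : Uᵀ * U = 1) (hV : Vᵀ * V = 1) (hd : ∀ j, 0 ≤ d j ∧ d j ≤ s j)
    (h21 : s 2 ≤ s 1) (h10 : s 1 ≤ s 0) (h2 : 0 ≤ s 2) :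
    Contr (s 0 * s 1) (adjugate (phi (U * Matrix.diagonal d * V))) := by
  have hdm : phi (Matrix.diagonal d) = diagonal (fun j => ((d j : ℝ) : ℂ)) := by
    rw [RingHom.mapMatrix_apply, diagonal_map (by simp)]
    rfl
  have hD : Contr (s 0 * s 1) (adjugate (diagonal (fun j => ((d j : ℝ) : ℂ)))) := by
    rw [adjugate_diagonal]
    apply contr_diagonal
    intro i
    obtain ⟨hd0, hd0'⟩ := hd 0
    obtain ⟨hd1, hd1'⟩ := hd 1
    obtain ⟨hd2, hd2'⟩ := hd 2
    have hs1 : 0 ≤ s 1 := h2.trans h21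
    have hs0 : 0 ≤ s 0 := hs1.trans h10
    fin_cases i
    · show Complex.normSq (∏ j ∈ Finset.univ.erase (0 : Fin 3), ((d j : ℝ) : ℂ)) ≤ (s 0 * s 1)^2
      rw [show (Finset.univ.erase (0 : Fin 3)) = {1, 2} by decide,
        Finset.prod_pair (by decide)]
      rw [show ((d 1 : ℝ) : ℂ) * ((d 2 : ℝ) : ℂ) = (((d 1 * d 2 : ℝ)) : ℂ) by push_cast; ring,
        Complex.normSq_ofReal]
      have ha1 : d 1 * d 2 ≤ s 1 * s 2 := mul_le_mul hd1' hd2' hd2 hs1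
      have hb1 : s 1 * s 2 ≤ s 0 * s 1 := by
        nlinarith [mul_nonneg hs1 (sub_nonneg.2 h21), mul_nonneg hs1 (sub_nonneg.2 h10)]
      have hk0 : 0 ≤ d 1 * d 2 := mul_nonneg hd1 hd2
      nlinarith [ha1.trans hb1, hk0]
    · show Complex.normSq (∏ j ∈ Finset.univ.erase (1 : Fin 3), ((d j : ℝ) : ℂ)) ≤ (s 0 * s 1)^2
      rw [show (Finset.univ.erase (1 : Fin 3)) = {0, 2} by decide,
        Finset.prod_pair (by decide)]
      rw [show ((d 0 : ℝ) : ℂ) * ((d 2 : ℝ) : ℂ) = (((d 0 * d 2 : ℝ)) : ℂ) by push_cast; ring,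
        Complex.normSq_ofReal]
      have ha1 : d 0 * d 2 ≤ s 0 * s 2 := mul_le_mul hd0' hd2' hd2 hs0
      have hb1 : s 0 * s 2 ≤ s 0 * s 1 := mul_le_mul_of_nonneg_left h21 hs0
      have hk0 : 0 ≤ d 0 * d 2 := mul_nonneg hd0 hd2
      nlinarith [ha1.trans hb1, hk0]
    · show Complex.normSq (∏ j ∈ Finset.univ.erase (2 : Fin 3), ((d j : ℝ) : ℂ)) ≤ (s 0 * s 1)^2
      rw [show (Finset.univ.erase (2 : Fin 3)) = {0, 1} by decide,
        Finset.prod_pair (by decide)]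
      rw [show ((d 0 : ℝ) : ℂ) * ((d 1 : ℝ) : ℂ) = (((d 0 * d 1 : ℝ)) : ℂ) by push_cast; ring,
        Complex.normSq_ofReal]
      have ha1 : d 0 * d 1 ≤ s 0 * s 1 := mul_le_mul hd0' hd1' hd1 hs0
      have hk0 : 0 ≤ d 0 * d 1 := mul_nonneg hd0 hd1
      nlinarith [ha1, hk0]
  rw [_root_.map_mul, _root_.map_mul, hdm, adjugate_mul_distrib, adjugate_mul_distrib]
  have h := contr_mul (contr_adj_unitary (unitary_map hV))
    (contr_mul hD (contr_adj_unitary (unitary_map hU)))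
  simpa using h

lemma abs_list_prod_le {m : ℝ} (hm : 0 ≤ m) (L : List ℝ) (h : ∀ r ∈ L, |r| ≤ m) :
    |L.prod| ≤ m ^ L.length := by
  induction L with
  | nil => simp
  | cons r L ih =>
      rw [List.prod_cons, List.length_cons, abs_mul, pow_succ, mul_comm (m ^ L.length) m]
      exact mul_le_mul (h r (by simp)) (ih fun t ht => h t (List.mem_cons_of_mem _ ht))
        (abs_nonneg _) hm

/-- Let `A_1, …, A_n` be real 3×3 matrices whose singular values are bounded by
`s_1 ≥ s_2 ≥ s_3 ≥ 0` (encoded via singular value decompositions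
`A_i = U_i D_i V_i` with `U_i, V_i` orthogonal and the diagonal entries of `D_i`
in `[0, s_j]`).  Then `|tr(A_1 ⋯ A_n)| ≤ s_1^n + s_2^n + s_3^n`. -/
theorem stmt13 (n : ℕ) (A : Fin n → Matrix (Fin 3) (Fin 3) ℝ) (s : Fin 3 → ℝ)
    (h21 : s 2 ≤ s 1) (h10 : s 1 ≤ s 0) (h2 : 0 ≤ s 2)
    (hsvd : ∀ i, ∃ (U V : Matrix (Fin 3) (Fin 3) ℝ) (d : Fin 3 → ℝ),
      Uᵀ * U = 1 ∧ Vᵀ * V = 1 ∧ (∀ j, 0 ≤ d j ∧ d j ≤ s j) ∧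
      A i = U * Matrix.diagonal d * V) :
    |((List.ofFn A).prod).trace| ≤ s 0 ^ n + s 1 ^ n + s 2 ^ n := by
  choose U V d hU hV hd hA using hsvd
  have hs1 : 0 ≤ s 1 := h2.trans h21
  have hs0 : 0 ≤ s 0 := hs1.trans h10
  set P : Matrix (Fin 3) (Fin 3) ℝ := (List.ofFn A).prod with hP
  set Pc : Matrix (Fin 3) (Fin 3) ℂ := phi P with hPc
  have hLc : Pc = ((List.ofFn A).map phi).prod := by
    rw [hPc, hP]; exact map_list_prod phi _
  have hlen : ((List.ofFn A).map phi).length = n := by simp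
  have hmem : ∀ N ∈ (List.ofFn A).map phi,
      Contr (s 0) N ∧ Contr (s 0 * s 1) (adjugate N) := by
    intro N hN
    obtain ⟨M, hM, rfl⟩ := List.mem_map.mp hN
    obtain ⟨i, rfl⟩ := List.mem_ofFn.mp hM
    rw [hA i]
    exact ⟨contr_factor (hU i) (hV i) (hd i) h21 h10 h2,
      contr_adj_factor (hU i) (hV i) (hd i) h21 h10 h2⟩
  have hcP : Contr (s 0 ^ n) Pc := by
    rw [hLc]
    have := contr_list_prod hs0 _ (fun N h => (hmem N h).1)
    rwa [hlen] at this
  have hcAdj : Contr ((s 0 * s 1) ^ n) (adjugate Pc) := by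
    rw [hLc]
    have := contr_adj_list_prod (mul_nonneg hs0 hs1) _ (fun N h => (hmem N h).2)
    rwa [hlen] at this
  -- roots of the characteristic polynomial
  have hmonic := Pc.charpoly_monic
  have hsplits : Pc.charpoly.Splits := IsAlgClosed.splits _
  have hdeg : Pc.charpoly.natDegree = 3 := by
    rw [Matrix.charpoly_natDegree_eq_dim]; simp
  have hcard : Pc.charpoly.roots.card = 3 := by
    rw [Polynomial.splits_iff_card_roots.mp hsplits, hdeg]
  obtain ⟨x, y, w, hl⟩ := List.length_eq_three.mp
    (by rw [Multiset.length_toList, hcard] : Pc.charpoly.roots.toList.length = 3)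
  have hroots : Pc.charpoly.roots = {x, y, w} := by
    rw [← Multiset.coe_toList Pc.charpoly.roots, hl]; rfl
  have htr : Pc.trace = x + y + w := by
    rw [Matrix.trace_eq_sum_roots_charpoly, hroots]; simp; try ring
  have hdet : Pc.det = x * y * w := by
    rw [Matrix.det_eq_prod_roots_charpoly, hroots]; simp [mul_assoc]
  have hfac : ∀ z : ℂ, det (z • (1 : Matrix (Fin 3) (Fin 3) ℂ) - Pc)
      = (z - x) * (z - y) * (z - w) := by
    intro z
    rw [← eval_charpoly3]
    conv_lhs => rw [hsplits.eq_prod_roots_of_monic hmonic]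
    rw [hroots]
    simp [Polynomial.eval_multiset_prod]
    try ring
  have htradj : (adjugate Pc).trace = x*y + x*w + y*w := by
    have h1 := det_id1 Pc 1
    rw [hfac 1, htr, hdet] at h1
    linear_combination -h1
  -- eigenvalue bounds
  have hx : ‖x‖ ≤ s 0 ^ n :=
    contr_eigen hcP (pow_nonneg hs0 n) (by rw [hfac x]; ring)
  have hy : ‖y‖ ≤ s 0 ^ n :=
    contr_eigen hcP (pow_nonneg hs0 n) (by rw [hfac y]; ring)
  have hw : ‖w‖ ≤ s 0 ^ n :=
    contr_eigen hcP (pow_nonneg hs0 n) (by rw [hfac w]; ring)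
  have hadj_eigen : ∀ z : ℂ, (z = x*y ∨ z = x*w ∨ z = y*w) →
      det (z • (1 : Matrix (Fin 3) (Fin 3) ℂ) - adjugate Pc) = 0 := by
    intro z hz
    rw [det_id2, htradj, htr, hdet]
    rcases hz with rfl | rfl | rfl <;> ring
  have hxy : ‖x*y‖ ≤ (s 0 * s 1) ^ n :=
    contr_eigen hcAdj (pow_nonneg (mul_nonneg hs0 hs1) n) (hadj_eigen _ (Or.inl rfl))
  have hxw : ‖x*w‖ ≤ (s 0 * s 1) ^ n :=
    contr_eigen hcAdj (pow_nonneg (mul_nonneg hs0 hs1) n) (hadj_eigen _ (Or.inr (Or.inl rfl)))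
  have hyw : ‖y*w‖ ≤ (s 0 * s 1) ^ n :=
    contr_eigen hcAdj (pow_nonneg (mul_nonneg hs0 hs1) n) (hadj_eigen _ (Or.inr (Or.inr rfl)))
  -- determinant bound
  have hdetP : |P.det| ≤ (s 0 * s 1 * s 2) ^ n := by
    have hdl : P.det = ((List.ofFn A).map Matrix.det).prod := by
      rw [hP, ← Matrix.coe_detMonoidHom, map_list_prod]
      try simp [Matrix.coe_detMonoidHom]
    have hlen2 : ((List.ofFn A).map Matrix.det).length = n := by simp
    rw [hdl, show (s 0 * s 1 * s 2) ^ n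
      = (s 0 * s 1 * s 2) ^ ((List.ofFn A).map Matrix.det).length by rw [hlen2]]
    apply abs_list_prod_le (by positivity)
    intro r hr
    obtain ⟨M, hM, rfl⟩ := List.mem_map.mp hr
    obtain ⟨i, rfl⟩ := List.mem_ofFn.mp hM
    rw [hA i, det_mul, det_mul, det_diagonal, Fin.prod_univ_three]
    obtain ⟨hd0, hd0'⟩ := hd i 0
    obtain ⟨hd1, hd1'⟩ := hd i 1
    obtain ⟨hd2, hd2'⟩ := hd i 2
    have hUdet : (U i).det * (U i).det = 1 := by
      have := congr_arg Matrix.det (hU i)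
      rwa [det_mul, det_transpose, det_one] at this
    have hVdet : (V i).det * (V i).det = 1 := by
      have := congr_arg Matrix.det (hV i)
      rwa [det_mul, det_transpose, det_one] at this
    have haU : |(U i).det| = 1 := by
      rcases mul_self_eq_one_iff.mp hUdet with h | h <;> rw [h] <;> norm_num
    have haV : |(V i).det| = 1 := by
      rcases mul_self_eq_one_iff.mp hVdet with h | h <;> rw [h] <;> norm_num
    rw [abs_mul, abs_mul, haU, haV, one_mul, mul_one,
      _root_.abs_of_nonneg (by positivity : (0:ℝ) ≤ d i 0 * d i 1 * d i 2)]
    have hq : d i 0 * d i 1 ≤ s 0 * s 1 := mul_le_mul hd0' hd1' hd1 hs0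
    exact mul_le_mul hq hd2' hd2 (mul_nonneg hs0 hs1)
  have hxyz : ‖x*y*w‖ ≤ (s 0 * s 1 * s 2) ^ n := by
    have hmap : Pc.det = ((P.det : ℝ) : ℂ) := by
      rw [hPc, ← _root_.RingHom.map_det]
      rfl
    rw [← hdet, hmap, Complex.norm_real, Real.norm_eq_abs]
    exact hdetP
  -- trace of the complexification
  have htrP : Pc.trace = ((P.trace : ℝ) : ℂ) := by
    rw [hPc, RingHom.mapMatrix_apply]
    simp [Matrix.trace, Matrix.diag, Matrix.map_apply]
  have habs : |P.trace| = ‖x + y + w‖ := by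
    rw [← htr, htrP, Complex.norm_real, Real.norm_eq_abs]
  rw [habs]
  have htri : ‖x + y + w‖ ≤
      ‖x‖ + ‖y‖ + ‖w‖ := by
    calc ‖x + y + w‖ ≤ ‖x + y‖ + ‖w‖ :=
          norm_add_le _ _
      _ ≤ ‖x‖ + ‖y‖ + ‖w‖ := by
          linarith [norm_add_le x y]
  refine htri.trans ?_
  have hB32 : s 2 ^ n ≤ s 1 ^ n := pow_le_pow_left₀ h2 h21 n
  have hB21 : s 1 ^ n ≤ s 0 ^ n := pow_le_pow_left₀ hs1 h10 n
  apply key3 _ _ _ _ _ _ (norm_nonneg x) (norm_nonneg y) (norm_nonneg w)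
    (pow_nonneg h2 n) hB32 hB21 hx hy hw
  · rw [← norm_mul, show s 0 ^ n * s 1 ^ n = (s 0 * s 1) ^ n by rw [mul_pow]]
    exact hxy
  · rw [← norm_mul, show s 0 ^ n * s 1 ^ n = (s 0 * s 1) ^ n by rw [mul_pow]]
    exact hxw
  · rw [← norm_mul, show s 0 ^ n * s 1 ^ n = (s 0 * s 1) ^ n by rw [mul_pow]]
    exact hyw
  · rw [← norm_mul, ← norm_mul,
      show s 0 ^ n * s 1 ^ n * s 2 ^ n = (s 0 * s 1 * s 2) ^ n by rw [mul_pow, mul_pow]]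
    exact hxyz
end

section
/- For the n-qubit cyclic cluster state game (n ≥ 3), the classical value satisfies p_cl* ≥ 1/2 + (1/2^{n+1})(λ_0^n + λ_+^n + λ_−^n), where λ_0, λ_± are the three roots of λ^3 − 2λ − 2 = 0. Equivalently, the number of strings x ∈ {0,1}^n (indices cyclic mod n) with Σ_{j=1}^n x_{j−1} x_j x_{j+1} ≡ 0 (mod 2) equals 2^{n−1} + (1/2)(λ_0^n + λ_+^n + λ_−^n). -/
namespace Stmt14Aux

open Finset Matrix

variable {ι : Type*} [Fintype ι] [DecidableEq ι] {R : Type*} [CommRing R]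

lemma pow_entry (M : Matrix ι ι R) (k : ℕ) (i j : ι) :
    (M ^ k) i j = ∑ g : Fin (k+1) → ι,
      if g 0 = i ∧ g (Fin.last k) = j then ∏ t : Fin k, M (g t.castSucc) (g t.succ) else 0 := by
  induction k generalizing i j with
  | zero =>
    rw [Fintype.sum_equiv (Equiv.funUnique (Fin 1) ι) _
      (fun a => if a = i ∧ a = j then (1:R) else 0) (fun g => by simp [Fin.last])]
    simp only [ite_and]
    rw [Finset.sum_ite_eq' Finset.univ i (fun a => if a = j then (1:R) else 0)]
    simp [Matrix.one_apply]
  | succ k ih =>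
    rw [pow_succ', Matrix.mul_apply]
    simp only [ih, Finset.mul_sum]
    conv_lhs => rw [Finset.sum_comm]
    rw [← Equiv.sum_comp (Fin.consEquiv fun _ : Fin (k+2) => ι)
      (fun g : Fin (k+2) → ι => if g 0 = i ∧ g (Fin.last (k+1)) = j then ∏ t : Fin (k+1), M (g t.castSucc) (g t.succ) else 0)]
    conv_rhs => rw [Fintype.sum_prod_type, Finset.sum_comm]
    refine Finset.sum_congr rfl fun g _ => ?_
    simp only [Fin.consEquiv_apply, ← Fin.succ_last, Fin.cons_succ, Fin.cons_zero,
      Fin.prod_univ_succ, Fin.castSucc_zero, ← Fin.succ_castSucc, ite_and, mul_ite, mul_zero]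
    rw [Finset.sum_ite_eq Finset.univ (g 0)
      (fun x => if g (Fin.last k) = j then M i x * ∏ t : Fin k, M (g t.castSucc) (g t.succ) else 0)]
    rw [Finset.sum_ite_eq' Finset.univ i
      (fun x => if g (Fin.last k) = j then M x (g 0) * ∏ t : Fin k, M (g t.castSucc) (g t.succ) else 0)]
    simp

def zmodFinEquiv (n : ℕ) [NeZero n] : ZMod n ≃ Fin n where
  toFun j := ⟨j.val, j.val_lt⟩
  invFun t := ((t : ℕ) : ZMod n)
  left_inv j := ZMod.natCast_rightInverse j
  right_inv t := Fin.ext (ZMod.val_cast_of_lt t.isLt)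

lemma trace_cyclic (M : Matrix ι ι R) (n : ℕ) [NeZero n] :
    Matrix.trace (M ^ n) = ∑ x : ZMod n → ι, ∏ j : ZMod n, M (x j) (x (j + 1)) := by
  rw [Matrix.trace]
  simp only [Matrix.diag, pow_entry M n]
  rw [Finset.sum_comm]
  have step : ∀ g : Fin (n+1) → ι,
      (∑ i : ι, if g 0 = i ∧ g (Fin.last n) = i then ∏ t : Fin n, M (g t.castSucc) (g t.succ) else 0)
        = if g (Fin.last n) = g 0 then ∏ t : Fin n, M (g t.castSucc) (g t.succ) else 0 := by
    intro g
    simp only [ite_and]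
    rw [Finset.sum_ite_eq Finset.univ (g 0)
      (fun i => if g (Fin.last n) = i then ∏ t : Fin n, M (g t.castSucc) (g t.succ) else 0)]
    simp
  simp only [step]
  rw [← Finset.sum_filter]
  refine Finset.sum_nbij' (fun g => fun j : ZMod n => g ⟨j.val, j.val_lt.trans (Nat.lt_succ_self n)⟩)
    (fun x => fun t : Fin (n+1) => x ((t : ℕ) : ZMod n)) ?_ ?_ ?_ ?_ ?_
  · intro g hg; exact Finset.mem_univ _
  · intro x hx
    simp only [Finset.mem_filter, Finset.mem_univ, true_and]
    simp [Fin.last, ZMod.natCast_self]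
  · intro g hg
    simp only [Finset.mem_filter, Finset.mem_univ, true_and] at hg
    funext t
    rcases eq_or_lt_of_le (Nat.lt_succ_iff.mp t.isLt) with h | h
    · have ht : t = Fin.last n := Fin.ext h
      simp only [h, ZMod.natCast_self, ZMod.val_zero]
      trans g 0
      · exact congrArg g (Fin.ext (by simp))
      · rw [ht]; exact hg.symm
    · have hv : (((t : ℕ) : ZMod n)).val = (t : ℕ) := ZMod.val_cast_of_lt h
      simp only [hv]
  · intro x hx
    funext j
    simp only
    congr 1
    exact ZMod.natCast_rightInverse j
  · intro g hg
    simp only [Finset.mem_filter, Finset.mem_univ, true_and] at hg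
    rw [Fintype.prod_equiv (zmodFinEquiv n) _
      (fun t : Fin n => M (g t.castSucc) (g t.succ)) ?_]
    intro j
    have hjv : j.val < n := j.val_lt
    simp only [zmodFinEquiv, Equiv.coe_fn_mk, Fin.castSucc_mk, Fin.succ_mk]
    have hj1 : j + 1 = ((j.val + 1 : ℕ) : ZMod n) := by
      conv_lhs => rw [← ZMod.natCast_rightInverse j]
      push_cast
      ring
    rcases lt_or_eq_of_le (Nat.succ_le_of_lt hjv) with hlt | heq
    · have hval : (j + 1).val = j.val + 1 := by rw [hj1, ZMod.val_cast_of_lt hlt]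
      exact congrArg (fun u => M (g ⟨j.val, Nat.lt_succ_of_lt hjv⟩) (g u)) (Fin.ext hval)
    · have h2 : (j + 1).val = 0 := by
        rw [hj1, show j.val + 1 = n from heq, ZMod.natCast_self, ZMod.val_zero]
      have e3 : (⟨j.val + 1, Nat.succ_lt_succ hjv⟩ : Fin (n+1)) = Fin.last n :=
        Fin.ext (by simpa [Fin.last] using heq)
      rw [e3, hg]
      exact congrArg (fun u => M (g ⟨j.val, Nat.lt_succ_of_lt hjv⟩) (g u)) (Fin.ext (by simp [h2]))

def wz : ZMod 2 → ℤ := fun v => if v = 0 then 1 else -1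

def Mz : Matrix (ZMod 2 × ZMod 2) (ZMod 2 × ZMod 2) ℤ :=
  fun p q => if p.2 = q.1 then wz (p.1 * p.2 * q.2) else 0

lemma Mz_rec : Mz ^ 4 = (2 : ℤ) • Mz ^ 2 + (2 : ℤ) • Mz := by decide
lemma Mz_tr1 : Matrix.trace Mz = 0 := by decide
lemma Mz_tr2 : Matrix.trace (Mz ^ 2) = 4 := by decide
lemma Mz_tr3 : Matrix.trace (Mz ^ 3) = 6 := by decide

lemma wz_add : ∀ u v : ZMod 2, wz (u + v) = wz u * wz v := by decide

lemma wz_sum {α : Type*} (s : Finset α) (f : α → ZMod 2) :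
    wz (∑ a ∈ s, f a) = ∏ a ∈ s, wz (f a) := by
  induction s using Finset.cons_induction with
  | empty => simp [wz]
  | cons a s ha ih => rw [Finset.sum_cons, Finset.prod_cons, wz_add _ _, ih]

lemma tr_rec (k : ℕ) : Matrix.trace (Mz ^ (k + 4))
    = 2 * Matrix.trace (Mz ^ (k + 2)) + 2 * Matrix.trace (Mz ^ (k + 1)) := by
  have h : Mz ^ (k + 4) = (2:ℤ) • Mz ^ (k+2) + (2:ℤ) • Mz ^ (k+1) := by
    calc Mz ^ (k+4) = Mz ^ k * Mz ^ 4 := by rw [← pow_add]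
    _ = Mz ^ k * ((2:ℤ) • Mz ^ 2 + (2:ℤ) • Mz) := by rw [Mz_rec]
    _ = (2:ℤ) • (Mz ^ k * Mz ^ 2) + (2:ℤ) • (Mz ^ k * Mz ^ 1) := by
        rw [Matrix.mul_add, mul_smul_comm, mul_smul_comm, pow_one]
    _ = (2:ℤ) • Mz ^ (k+2) + (2:ℤ) • Mz ^ (k+1) := by rw [← pow_add, ← pow_add]
  rw [h, Matrix.trace_add, Matrix.trace_smul, Matrix.trace_smul, smul_eq_mul, smul_eq_mul]

lemma tr_eq (a p m : ℂ) (ha : a^3 = 2*a + 2) (hp : p^3 = 2*p + 2) (hm : m^3 = 2*m + 2)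
    (h1 : a + p + m = 0) (h2 : a^2 + p^2 + m^2 = 4) (k : ℕ) :
    ((Matrix.trace (Mz ^ (k+1)) : ℤ) : ℂ) = a^(k+1) + p^(k+1) + m^(k+1) := by
  have key : ∀ k : ℕ,
      ((Matrix.trace (Mz ^ (k+1)) : ℤ) : ℂ) = a^(k+1) + p^(k+1) + m^(k+1) ∧
      ((Matrix.trace (Mz ^ (k+2)) : ℤ) : ℂ) = a^(k+2) + p^(k+2) + m^(k+2) ∧
      ((Matrix.trace (Mz ^ (k+3)) : ℤ) : ℂ) = a^(k+3) + p^(k+3) + m^(k+3) := by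
    intro k
    induction k with
    | zero =>
      refine ⟨?_, ?_, ?_⟩
      · rw [pow_one, Mz_tr1]; push_cast; linear_combination -h1
      · rw [Mz_tr2]; push_cast; linear_combination -h2
      · rw [Mz_tr3]; push_cast; linear_combination -ha - hp - hm - 2*h1
    | succ k ih =>
      refine ⟨ih.2.1, ih.2.2, ?_⟩
      have e4 : k + 1 + 3 = k + 4 := by ring
      rw [e4, tr_rec k]
      push_cast
      rw [ih.2.1, ih.1]
      have ea : a^(k+4) = 2*a^(k+2) + 2*a^(k+1) := by
        have h : a^(k+4) = a^(k+1) * a^3 := by ring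
        rw [h, ha]; ring
      have ep : p^(k+4) = 2*p^(k+2) + 2*p^(k+1) := by
        have h : p^(k+4) = p^(k+1) * p^3 := by ring
        rw [h, hp]; ring
      have em : m^(k+4) = 2*m^(k+2) + 2*m^(k+1) := by
        have h : m^(k+4) = m^(k+1) * m^3 := by ring
        rw [h, hm]; ring
      rw [ea, ep, em]; ring
  exact (key k).1

lemma trace_eq_sum (n : ℕ) [NeZero n] :
    Matrix.trace (Mz ^ n)
      = ∑ x : ZMod n → ZMod 2, wz (∑ j : ZMod n, x j * x (j+1) * x (j+1+1)) := by
  rw [trace_cyclic Mz n]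
  rw [← Equiv.sum_comp (Equiv.arrowProdEquivProdArrow (ZMod n) (fun _ => ZMod 2) (fun _ => ZMod 2)).symm
    (fun h : ZMod n → ZMod 2 × ZMod 2 => ∏ j : ZMod n, Mz (h j) (h (j + 1)))]
  rw [Fintype.sum_prod_type]
  refine Finset.sum_congr rfl fun x _ => ?_
  rw [Finset.sum_eq_single_of_mem (fun j : ZMod n => x (j + 1)) (Finset.mem_univ _)]
  · rw [wz_sum]
    refine Finset.prod_congr rfl fun j _ => ?_
    simp [Equiv.arrowProdEquivProdArrow, Mz]
  · intro y _ hy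
    obtain ⟨j, hj⟩ := Function.ne_iff.mp hy
    refine Finset.prod_eq_zero (Finset.mem_univ j) ?_
    simp only [Equiv.arrowProdEquivProdArrow, Equiv.coe_fn_symm_mk, Equiv.coe_fn_mk]
    exact if_neg hj

end Stmt14Aux

open Stmt14Aux


/-- For the `n`-qubit cyclic cluster state game (`n ≥ 3`) with parity function
`c(x) = Σ_j x_{j−1} x_j x_{j+1} (mod 2)` (cyclic indexing): the classical value
— a maximum over deterministic strategies, in which player `j` answers a bit
depending only on their question, encoded by the pair
`(x_j, x_{j−1}+x_{j+1}) ∈ F_2²` — is at least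
`1/2 + (1/2^{n+1})(λ0^n + λ+^n + λ−^n)`, where `λ0, λ±` are the three roots of
`λ^3 − 2λ − 2 = 0`.  Equivalently, the number of strings `x` with `c(x) = 0`
equals `2^{n−1} + (1/2)(λ0^n + λ+^n + λ−^n)`. -/
theorem stmt14 (n : ℕ) [NeZero n] (hn : 3 ≤ n)
    (lam0 : ℝ) (h0 : lam0 ^ 3 - 2 * lam0 - 2 = 0)
    (lamp lamm : ℂ) (hp : lamp ^ 3 - 2 * lamp - 2 = 0) (hpim : lamp.im ≠ 0)
    (hm : lamm = (starRingEnd ℂ) lamp)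
    (c : (ZMod n → ZMod 2) → ZMod 2)
    (hc : ∀ x, c x = ∑ j : ZMod n, x (j - 1) * x j * x (j + 1)) :
    ((Finset.univ.filter fun x : ZMod n → ZMod 2 => c x = 0).card : ℂ)
        = 2 ^ (n - 1) + (1 / 2) * ((lam0 : ℂ) ^ n + lamp ^ n + lamm ^ n) ∧
    ∃ b : ZMod n → ZMod 2 → ZMod 2 → ZMod 2,
      (1 / 2 : ℝ) + (1 / 2 ^ (n + 1)) * (((lam0 : ℂ) ^ n + lamp ^ n + lamm ^ n).re) ≤
        ((Finset.univ.filter fun x : ZMod n → ZMod 2 =>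
            (∑ j, b j (x j) (x (j - 1) + x (j + 1))) = c x).card : ℝ) / 2 ^ n := by
  -- notation
  set a : ℂ := (lam0 : ℂ) with ha_def
  set p : ℂ := lamp
  set m : ℂ := lamm
  have ha : a ^ 3 = 2 * a + 2 := by
    have := congrArg (Complex.ofReal) h0
    push_cast at this
    linear_combination this
  have hp' : p ^ 3 = 2 * p + 2 := by linear_combination hp
  have hm' : m ^ 3 = 2 * m + 2 := by
    rw [hm]
    have := congrArg (starRingEnd ℂ) hp
    simp only [map_sub, map_mul, map_pow, map_ofNat, map_zero] at this
    linear_combination this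
  -- distinctness
  have haim : a.im = 0 := by simp [ha_def]
  have hmim : m.im = -p.im := by rw [hm]; simp
  have hap : p ≠ a := fun h => hpim (by rw [h]; exact haim)
  have ham : m ≠ a := by
    intro h
    apply hpim
    have : m.im = 0 := by rw [h, haim]
    rw [hmim] at this; linarith [this]
  have hpm : p ≠ m := by
    intro h
    exact hpim (Complex.conj_eq_iff_im.mp (by rw [← hm, ← h]))
  -- Vieta-style identities
  have E1 : p^2 + p*a + a^2 = 2 := by
    apply mul_left_cancel₀ (sub_ne_zero.mpr hap)
    linear_combination hp' - ha
  have E2 : m^2 + m*a + a^2 = 2 := by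
    apply mul_left_cancel₀ (sub_ne_zero.mpr ham)
    linear_combination hm' - ha
  have E3 : p^2 + p*m + m^2 = 2 := by
    apply mul_left_cancel₀ (sub_ne_zero.mpr hpm)
    linear_combination hp' - hm'
  have h1 : a + p + m = 0 := by
    apply mul_left_cancel₀ (sub_ne_zero.mpr hpm)
    linear_combination E1 - E2
  have h2 : a^2 + p^2 + m^2 = 4 := by linear_combination 2*E3 + (a - p - m)*h1
  -- trace value
  have hn1 : n - 1 + 1 = n := Nat.sub_add_cancel (by omega)
  have htr : ((Matrix.trace (Mz ^ n) : ℤ) : ℂ) = a^n + p^n + m^n := by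
    have := tr_eq a p m ha hp' hm' h1 h2 (n - 1)
    rwa [hn1] at this
  -- counting
  set N0 := (Finset.univ.filter fun x : ZMod n → ZMod 2 => c x = 0).card with hN0
  set N1 := (Finset.univ.filter fun x : ZMod n → ZMod 2 => ¬ (c x = 0)).card with hN1
  have hcard : N0 + N1 = 2 ^ n := by
    rw [hN0, hN1, Finset.card_filter_add_card_filter_not]
    simp [Fintype.card_fun, ZMod.card]
  have hdiff : ((Matrix.trace (Mz ^ n) : ℤ) : ℂ) = (N0 : ℂ) - (N1 : ℂ) := by
    rw [trace_eq_sum n]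
    push_cast
    have hsum : ∀ x : ZMod n → ZMod 2,
        ((wz (∑ j : ZMod n, x j * x (j+1) * x (j+1+1)) : ℤ) : ℂ)
          = if c x = 0 then (1 : ℂ) else -1 := by
      intro x
      have hre : (∑ j : ZMod n, x j * x (j+1) * x (j+1+1)) = c x := by
        rw [hc]
        refine Fintype.sum_equiv (Equiv.addRight (1 : ZMod n)) _ _ fun j => ?_
        simp [Equiv.addRight]
      rw [hre, wz]
      split <;> simp
    rw [Finset.sum_congr rfl (fun x _ => hsum x)]
    rw [Finset.sum_ite]
    simp [hN0, hN1]
    ring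
  have h2n : (2:ℂ)^n = 2 * 2^(n-1) := by
    conv_lhs => rw [← hn1]
    rw [pow_succ]
    ring
  have main : ((N0 : ℂ)) = 2 ^ (n - 1) + (1 / 2) * (a^n + p^n + m^n) := by
    have hc2 : ((N0:ℂ)) + (N1:ℂ) = 2^n := by
      have := congrArg (fun k : ℕ => (k : ℂ)) hcard
      push_cast at this
      exact this
    rw [← htr]
    rw [hdiff]
    linear_combination (1/2) * hc2 + (1/2) * h2n
  constructor
  · exact main
  · refine ⟨fun _ _ _ => 0, ?_⟩
    have hfilter : (Finset.univ.filter fun x : ZMod n → ZMod 2 =>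
        (∑ j : ZMod n, (0 : ZMod 2)) = c x) = (Finset.univ.filter fun x : ZMod n → ZMod 2 => c x = 0) := by
      apply Finset.filter_congr
      intro x _
      simp [eq_comm]
    have mainre : (N0 : ℝ) = 2 ^ (n - 1) + (1/2) * ((a^n + p^n + m^n).re) := by
      have hre2 : ((2:ℂ)^(n-1)).re = (2:ℝ)^(n-1) := by
        rw [show ((2:ℂ)) = ((2:ℝ):ℂ) by norm_num, ← Complex.ofReal_pow, Complex.ofReal_re]
      have := congrArg Complex.re main
      simpa [Complex.add_re, Complex.mul_re, hre2] using this
    rw [hfilter]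
    rw [← hN0]
    rw [mainre]
    have hpow : (2:ℝ)^n = 2 * 2^(n-1) := by
      conv_lhs => rw [← hn1]
      rw [pow_succ]; ring
    have hpos : (0:ℝ) < 2^(n-1) := by positivity
    apply le_of_eq
    have h21 : (2:ℝ)^(n+1) = 2 * 2^n := by rw [pow_succ]; ring
    rw [h21, hpow]
    field_simp
end
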